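/- Let X be an Archimedean vector lattice admitting a positively homogeneous continuous function calculus x ↦ Φ_x. Then for all m, n ∈ ℕ, x ∈ Xⁿ, f₁,…,f_m ∈ H_n and g ∈ H_m, one has Φ_{(Φ_x(f₁),…,Φ_x(f_m))}(g) = Φ_x(g ∘ (f₁ × ⋯ × f_m)), where (f₁ × ⋯ × f_m)(t) = (f₁(t),…,f_m(t)). -/

import Mathlib

/-! Both sides, as functions of `g`, are vector lattice homomorphisms `H_m → X` sending the
`i`-th projection to `Φ_x(f_i)`, so it suffices that such a homomorphism is determined by its
values on the projections when `X` is Archimedean. The functions on which two such homomorphisms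
agree form a vector sublattice of `H_m` that contains the projections, hence all linear forms;
it separates the points of the unit sphere strongly, so by the lattice Stone–Weierstrass theorem
and homogeneity it approximates every `g ∈ H_m` within `ε ‖·‖`. Monotonicity of the
homomorphisms turns this into `Φ₁ g - Φ₂ g ≤ ε • (Φ₁ ‖·‖ + Φ₂ ‖·‖)` for all `ε > 0`, and the
Archimedean property gives `Φ₁ g ≤ Φ₂ g`. -/

/-- `H_n`: positively homogeneous continuous functions `ℝⁿ → ℝ`. -/
def MemHn {n : ℕ} (f : (Fin n → ℝ) → ℝ) : Prop :=
  Continuous f ∧ ∀ (c : ℝ), 0 ≤ c → ∀ t, f (c • t) = c * f t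

/-- the `i`-th coordinate projection, an element of `H_n`. -/
def projFn (n : ℕ) (i : Fin n) : (Fin n → ℝ) → ℝ := fun t => t i

section VL
variable {X : Type*} [Lattice X] [AddCommGroup X] [Module ℝ X]

/-- A vector lattice homomorphism `H_n → X`, encoded as a map on all functions
that is linear and sup-preserving on members of `H_n`. -/
def IsVLHomHn {n : ℕ} (Φ : ((Fin n → ℝ) → ℝ) → X) : Prop :=
  (∀ f g, MemHn f → MemHn g → Φ (f + g) = Φ f + Φ g) ∧
  (∀ (c : ℝ) f, MemHn f → Φ (c • f) = c • Φ f) ∧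
  (∀ f g, MemHn f → MemHn g → Φ (f ⊔ g) = Φ f ⊔ Φ g)

/-- The order ideal generated by `e`. -/
def Ie (e : X) : Set X := {x | ∃ l : ℝ, 0 ≤ l ∧ |x| ≤ l • e}

/-- `‖x‖_e = inf {λ ≥ 0 : |x| ≤ λ e}`. -/
noncomputable def enorm (e x : X) : ℝ := sInf {l : ℝ | 0 ≤ l ∧ |x| ≤ l • e}

/-- A sublattice and linear subspace. -/
def IsSubl (S : Set X) : Prop :=
  (0 : X) ∈ S ∧ (∀ a ∈ S, ∀ b ∈ S, a + b ∈ S) ∧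
  (∀ (c : ℝ), ∀ a ∈ S, c • a ∈ S) ∧ (∀ a ∈ S, ∀ b ∈ S, a ⊔ b ∈ S)

/-- `S` is closed in the carrier `C` with respect to the `‖·‖_e`-distance. -/
def ClosedIn (e : X) (C S : Set X) : Prop :=
  ∀ x ∈ C, (∀ ε : ℝ, 0 < ε → ∃ y ∈ S, enorm e (x - y) < ε) → x ∈ S

/-- The closed sublattice of `C` generated by the set `A`. -/
def genClosedSubl (e : X) (C A : Set X) : Set X :=
  ⋂₀ {S : Set X | S ⊆ C ∧ A ⊆ S ∧ IsSubl S ∧ ClosedIn e C S}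

/-- The norm `‖·‖_e` is complete on `S`: every `‖·‖_e`-Cauchy sequence in `S`
converges, in `‖·‖_e`, to an element of `S`. -/
def CompleteOn (e : X) (S : Set X) : Prop :=
  ∀ u : ℕ → X, (∀ k, u k ∈ S) →
    (∀ ε : ℝ, 0 < ε → ∃ N, ∀ m ≥ N, ∀ n ≥ N, enorm e (u m - u n) < ε) →
    ∃ x ∈ S, ∀ ε : ℝ, 0 < ε → ∃ N, ∀ m ≥ N, enorm e (u m - x) < ε

end VL

/-- An Archimedean vector lattice. -/
def IsArchimedeanVL (X : Type*) [Lattice X] [AddCommGroup X] : Prop :=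
  ∀ x y : X, 0 ≤ x → 0 ≤ y → (∀ n : ℕ, n • x ≤ y) → x = 0

lemma memHn_zero {n : ℕ} : MemHn (0 : (Fin n → ℝ) → ℝ) :=
  ⟨continuous_const, fun _ _ _ => by simp⟩

lemma memHn_projFn {n : ℕ} (i : Fin n) : MemHn (projFn n i) :=
  ⟨continuous_apply i, fun _ _ _ => rfl⟩

lemma memHn_norm {n : ℕ} : MemHn (fun t : Fin n → ℝ => ‖t‖) :=
  ⟨continuous_norm, fun c hc t => by simp only [norm_smul, Real.norm_of_nonneg hc]⟩

namespace MemHn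

variable {n : ℕ} {f g : (Fin n → ℝ) → ℝ}

lemma add (hf : MemHn f) (hg : MemHn g) : MemHn (f + g) :=
  ⟨hf.1.add hg.1, fun c hc t => by simp only [Pi.add_apply, hf.2 c hc, hg.2 c hc, mul_add]⟩

lemma smul (a : ℝ) (hf : MemHn f) : MemHn (a • f) :=
  ⟨hf.1.const_smul a, fun c hc t => by
    simp only [Pi.smul_apply, smul_eq_mul, hf.2 c hc]; ring⟩

lemma sub (hf : MemHn f) (hg : MemHn g) : MemHn (f - g) := by
  simpa [sub_eq_add_neg] using hf.add (hg.smul (-1))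

lemma sup (hf : MemHn f) (hg : MemHn g) : MemHn (f ⊔ g) :=
  ⟨hf.1.sup hg.1, fun c hc t => by
    simp only [Pi.sup_apply, hf.2 c hc, hg.2 c hc, mul_max_of_nonneg _ _ hc]⟩

lemma apply_zero (hf : MemHn f) : f 0 = 0 := by
  simpa using hf.2 0 le_rfl 0

lemma comp {m : ℕ} {g : (Fin m → ℝ) → ℝ} {f : Fin m → (Fin n → ℝ) → ℝ} (hg : MemHn g)
    (hf : ∀ i, MemHn (f i)) : MemHn (fun t => g (fun i => f i t)) := by
  refine ⟨hg.1.comp (continuous_pi fun i => (hf i).1), fun c hc t => ?_⟩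
  have : (fun i => f i (c • t)) = c • fun i => f i t := funext fun i => (hf i).2 c hc t
  simp only [this, hg.2 c hc]

lemma abs_le_mul_norm (hf : MemHn f) {ε : ℝ} (hε : ∀ t, ‖t‖ = 1 → |f t| ≤ ε) (t : Fin n → ℝ) :
    |f t| ≤ ε * ‖t‖ := by
  rcases eq_or_ne t 0 with rfl | ht
  · simp [hf.apply_zero]
  have hnorm : 0 < ‖t‖ := norm_pos_iff.mpr ht
  have hunit : ‖‖t‖⁻¹ • t‖ = 1 := by
    rw [norm_smul, norm_inv, norm_norm, inv_mul_cancel₀ hnorm.ne']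
  calc |f t| = |f (‖t‖ • ‖t‖⁻¹ • t)| := by rw [smul_inv_smul₀ hnorm.ne']
    _ = ‖t‖ * |f (‖t‖⁻¹ • t)| := by rw [hf.2 _ hnorm.le, abs_mul, abs_of_pos hnorm]
    _ ≤ ε * ‖t‖ := by rw [mul_comm]; exact mul_le_mul_of_nonneg_right (hε _ hunit) hnorm.le

end MemHn

lemma exists_dual_apply_ne_zero_apply_eq_zero {K V : Type*} [Field K] [AddCommGroup V]
    [Module K V] {x y : V} (hxy : x ∉ K ∙ y) : ∃ φ : Module.Dual K V, φ x ≠ 0 ∧ φ y = 0 := by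
  obtain ⟨φ, hφx, hφ⟩ := Submodule.exists_dual_map_eq_bot_of_notMem hxy inferInstance
  exact ⟨φ, hφx, (Submodule.mem_bot K).mp
    (hφ ▸ Submodule.mem_map_of_mem (Submodule.mem_span_singleton_self y))⟩

namespace IsSubl

section Lattice

variable {M : Type*} [Lattice M] [AddCommGroup M] [Module ℝ M] {S : Set M}

lemma neg_mem (hS : IsSubl S) {a : M} (ha : a ∈ S) : -a ∈ S := by
  simpa using hS.2.2.1 (-1) a ha

lemma inf_mem [IsOrderedAddMonoid M] (hS : IsSubl S) {a b : M} (ha : a ∈ S) (hb : b ∈ S) :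
    a ⊓ b ∈ S := by
  simpa [neg_sup] using hS.neg_mem (hS.2.2.2 _ (hS.neg_mem ha) _ (hS.neg_mem hb))

lemma sum_mem (hS : IsSubl S) {ι : Type*} (s : Finset ι) {a : ι → M} (ha : ∀ i ∈ s, a i ∈ S) :
    ∑ i ∈ s, a i ∈ S := by
  classical
  induction s using Finset.induction_on with
  | empty => simpa using hS.1
  | insert j s hj ih =>
    rw [Finset.sum_insert hj]
    exact hS.2.1 _ (ha j (Finset.mem_insert_self j s)) _
      (ih fun i hi => ha i (Finset.mem_insert_of_mem hi))

end Lattice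

variable {m : ℕ} {S : Set ((Fin m → ℝ) → ℝ)}

lemma dual_mem (hS : IsSubl S) (hproj : ∀ i, projFn m i ∈ S)
    (φ : Module.Dual ℝ (Fin m → ℝ)) : ⇑φ ∈ S := by
  have hφ : ⇑φ = ∑ i, φ (fun j => if i = j then 1 else 0) • projFn m i := by
    ext t
    simp [LinearMap.pi_apply_eq_sum_univ φ t, projFn, mul_comm]
  rw [hφ]
  exact hS.sum_mem _ fun i _ => hS.2.2.1 _ _ (hproj i)

/-- Two distinct points of the unit sphere are either antipodal, where a linear form `φ` with
`φ y = 1` is used through `φ ⊔ 0` and `(-φ) ⊔ 0`, or linearly independent, where linear forms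
suffice. -/
lemma exists_mem_apply_eq_apply_eq (hS : IsSubl S) (hproj : ∀ i, projFn m i ∈ S)
    {x y : Fin m → ℝ} (hx : ‖x‖ = 1) (hy : ‖y‖ = 1) (hxy : x ≠ y) (a b : ℝ) :
    ∃ p ∈ S, p x = a ∧ p y = b := by
  have hy0 : y ≠ 0 := by rintro rfl; simp at hy
  by_cases hdep : x ∈ ℝ ∙ y
  · obtain ⟨r, rfl⟩ := Submodule.mem_span_singleton.mp hdep
    have hr : r = -1 := by
      rw [norm_smul, hy, mul_one, Real.norm_eq_abs] at hx
      rcases abs_eq zero_le_one |>.mp hx with rfl | rfl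
      · exact absurd (one_smul ℝ y) hxy
      · rfl
    subst hr
    obtain ⟨φ, hφ⟩ := Module.Projective.exists_dual_eq_one ℝ hy0
    have hφS := hS.dual_mem hproj φ
    refine ⟨b • (⇑φ ⊔ 0) + a • (-⇑φ ⊔ 0),
      hS.2.1 _ (hS.2.2.1 _ _ (hS.2.2.2 _ hφS _ hS.1))
        _ (hS.2.2.1 _ _ (hS.2.2.2 _ (hS.neg_mem hφS) _ hS.1)), ?_, ?_⟩ <;> simp [hφ]
  · have hdep' : y ∉ ℝ ∙ x := by
      intro h
      obtain ⟨r, rfl⟩ := Submodule.mem_span_singleton.mp h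
      rcases eq_or_ne r 0 with rfl | hr
      · exact hy0 (zero_smul ℝ x)
      · exact hdep (Submodule.mem_span_singleton.mpr ⟨r⁻¹, inv_smul_smul₀ hr x⟩)
    obtain ⟨φ, hφx, hφy⟩ := exists_dual_apply_ne_zero_apply_eq_zero hdep
    obtain ⟨ψ, hψy, hψx⟩ := exists_dual_apply_ne_zero_apply_eq_zero hdep'
    refine ⟨(a / φ x) • ⇑φ + (b / ψ y) • ⇑ψ,
      hS.2.1 _ (hS.2.2.1 _ _ (hS.dual_mem hproj φ)) _ (hS.2.2.1 _ _ (hS.dual_mem hproj ψ)),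
      ?_, ?_⟩ <;> simp [hφx, hφy, hψx, hψy]

lemma exists_mem_abs_sub_le (hS : IsSubl S) (hHn : ∀ p ∈ S, MemHn p)
    (hproj : ∀ i, projFn m i ∈ S) {g : (Fin m → ℝ) → ℝ} (hg : MemHn g) {ε : ℝ} (hε : 0 < ε) :
    ∃ p ∈ S, ∀ t, |g t - p t| ≤ ε * ‖t‖ := by
  let K := Metric.sphere (0 : Fin m → ℝ) 1
  let restrict (p : (Fin m → ℝ) → ℝ) (hp : MemHn p) : C(K, ℝ) :=
    ⟨fun t => p t, hp.1.comp continuous_subtype_val⟩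
  let L : Set C(K, ℝ) := {F | ∃ p ∈ S, ∀ t : K, F t = p t}
  have hL : closure L = ⊤ := by
    refine ContinuousMap.sublattice_closure_eq_top L
      ⟨restrict 0 memHn_zero, 0, hS.1, fun _ => rfl⟩ ?_ ?_ ?_
    · rintro F ⟨p, hp, hFp⟩ G ⟨q, hq, hGq⟩
      exact ⟨p ⊓ q, hS.inf_mem hp hq, fun t => by simp [hFp, hGq]⟩
    · rintro F ⟨p, hp, hFp⟩ G ⟨q, hq, hGq⟩
      exact ⟨p ⊔ q, hS.2.2.2 _ hp _ hq, fun t => by simp [hFp, hGq]⟩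
    · intro v x y
      have hnorm (z : K) : ‖(z : Fin m → ℝ)‖ = 1 := mem_sphere_zero_iff_norm.mp z.2
      obtain ⟨p, hp, hpx, hpy⟩ : ∃ p ∈ S, p x = v x ∧ p y = v y := by
        rcases eq_or_ne x y with rfl | hxy
        · -- separate `x` from the antipodal point `-x`
          have hx0 : (x : Fin m → ℝ) ≠ 0 := fun h => by
            simpa [h] using hnorm x
          obtain ⟨p, hp, hpx, -⟩ := hS.exists_mem_apply_eq_apply_eq hproj (hnorm x)
            (by rw [norm_neg, hnorm x]) (fun h => hx0 (self_eq_neg.mp h)) (v x) 0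
          exact ⟨p, hp, hpx, hpx⟩
        · exact hS.exists_mem_apply_eq_apply_eq hproj (hnorm x) (hnorm y)
            (Subtype.coe_injective.ne hxy) (v x) (v y)
      exact ⟨restrict p (hHn p hp), ⟨p, hp, fun _ => rfl⟩, hpx, hpy⟩
  obtain ⟨F, ⟨p, hp, hFp⟩, hdist⟩ :=
    Metric.mem_closure_iff.mp (hL ▸ trivial : restrict g hg ∈ closure L) ε hε
  refine ⟨p, hp, (hg.sub (hHn p hp)).abs_le_mul_norm (fun t ht => ?_)⟩
  have := (ContinuousMap.dist_lt_iff hε).mp hdist ⟨t, mem_sphere_zero_iff_norm.mpr ht⟩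
  rw [Real.dist_eq, hFp] at this
  exact this.le

end IsSubl

lemma IsArchimedeanVL.nonpos_of_forall_sup_zero_le {X : Type*} [Lattice X] [AddCommGroup X]
    [IsOrderedAddMonoid X] [Module ℝ X] (hArch : IsArchimedeanVL X) {d E : X}
    (hE : 0 ≤ E) (h : ∀ k : ℕ, 0 < k → d ⊔ 0 ≤ (k : ℝ)⁻¹ • E) : d ≤ 0 := by
  refine le_sup_left.trans_eq (hArch _ E le_sup_right hE fun k => ?_)
  rcases Nat.eq_zero_or_pos k with rfl | hk
  · simpa using hE
  calc k • (d ⊔ 0) ≤ k • ((k : ℝ)⁻¹ • E) := nsmul_le_nsmul_right (h k hk) k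
    _ = E := by
      rw [← Nat.cast_smul_eq_nsmul ℝ, smul_inv_smul₀ (Nat.cast_ne_zero.mpr hk.ne')]

namespace IsVLHomHn

variable {X : Type*} [Lattice X] [AddCommGroup X] [Module ℝ X] {n : ℕ}
  {Φ Φ₁ Φ₂ : ((Fin n → ℝ) → ℝ) → X} {f g : (Fin n → ℝ) → ℝ}

lemma map_zero (h : IsVLHomHn Φ) : Φ 0 = 0 := by
  simpa using h.2.1 0 0 memHn_zero

lemma map_sub (h : IsVLHomHn Φ) (hf : MemHn f) (hg : MemHn g) : Φ (f - g) = Φ f - Φ g := by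
  rw [sub_eq_add_neg, ← neg_one_smul ℝ g, h.1 _ _ hf (hg.smul _), h.2.1 _ _ hg, neg_one_smul,
    ← sub_eq_add_neg]

lemma mono (h : IsVLHomHn Φ) (hf : MemHn f) (hg : MemHn g) (hfg : f ≤ g) : Φ f ≤ Φ g := by
  rw [← sup_eq_right.mpr hfg, h.2.2 _ _ hf hg]
  exact le_sup_left

lemma nonneg (h : IsVLHomHn Φ) (hf : MemHn f) (hf₀ : 0 ≤ f) : 0 ≤ Φ f :=
  h.map_zero ▸ h.mono memHn_zero hf hf₀

lemma comp {m : ℕ} (h : IsVLHomHn Φ) {f : Fin m → (Fin n → ℝ) → ℝ} (hf : ∀ i, MemHn (f i)) :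
    IsVLHomHn fun g : (Fin m → ℝ) → ℝ => Φ fun t => g fun i => f i t :=
  ⟨fun _ _ hu hv => h.1 _ _ (hu.comp hf) (hv.comp hf), fun c _ hu => h.2.1 c _ (hu.comp hf),
    fun _ _ hu hv => h.2.2 _ _ (hu.comp hf) (hv.comp hf)⟩

lemma isSubl_setOf_eq (h₁ : IsVLHomHn Φ₁) (h₂ : IsVLHomHn Φ₂) :
    IsSubl {p | MemHn p ∧ Φ₁ p = Φ₂ p} := by
  refine ⟨⟨memHn_zero, by rw [h₁.map_zero, h₂.map_zero]⟩, ?_, ?_, ?_⟩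
  · rintro p ⟨hp, hp₁₂⟩ q ⟨hq, hq₁₂⟩
    exact ⟨hp.add hq, by rw [h₁.1 _ _ hp hq, h₂.1 _ _ hp hq, hp₁₂, hq₁₂]⟩
  · rintro c p ⟨hp, hp₁₂⟩
    exact ⟨hp.smul c, by rw [h₁.2.1 _ _ hp, h₂.2.1 _ _ hp, hp₁₂]⟩
  · rintro p ⟨hp, hp₁₂⟩ q ⟨hq, hq₁₂⟩
    exact ⟨hp.sup hq, by rw [h₁.2.2 _ _ hp hq, h₂.2.2 _ _ hp hq, hp₁₂, hq₁₂]⟩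

variable [IsOrderedAddMonoid X]

lemma le_of_eq_projFn (hArch : IsArchimedeanVL X) (h₁ : IsVLHomHn Φ₁) (h₂ : IsVLHomHn Φ₂)
    (hproj : ∀ i, Φ₁ (projFn n i) = Φ₂ (projFn n i)) (hg : MemHn g) : Φ₁ g ≤ Φ₂ g := by
  let e : (Fin n → ℝ) → ℝ := fun t => ‖t‖
  have he₀ : 0 ≤ e := fun t => norm_nonneg t
  rw [← sub_nonpos]
  refine hArch.nonpos_of_forall_sup_zero_le (add_nonneg (h₁.nonneg memHn_norm he₀)
    (h₂.nonneg memHn_norm he₀)) fun k hk => ?_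
  have hε : (0 : ℝ) < (k : ℝ)⁻¹ := by positivity
  have hεe : MemHn ((k : ℝ)⁻¹ • e) := memHn_norm.smul _
  obtain ⟨p, ⟨hp, hp₁₂⟩, hgp⟩ := (isSubl_setOf_eq h₁ h₂).exists_mem_abs_sub_le (fun p hp => hp.1)
    (fun i => ⟨memHn_projFn i, hproj i⟩) hg hε
  have hle₁ : Φ₁ g - Φ₁ p ≤ Φ₁ ((k : ℝ)⁻¹ • e) := by
    rw [← h₁.map_sub hg hp]
    exact h₁.mono (hg.sub hp) hεe fun t => (le_abs_self _).trans (hgp t)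
  have hle₂ : Φ₂ p - Φ₂ g ≤ Φ₂ ((k : ℝ)⁻¹ • e) := by
    rw [← h₂.map_sub hp hg]
    exact h₂.mono (hp.sub hg) hεe fun t => (le_abs_self _).trans (abs_sub_comm (p t) _ ▸ hgp t)
  rw [smul_add, ← h₁.2.1 _ _ memHn_norm, ← h₂.2.1 _ _ memHn_norm]
  refine sup_le ?_ (add_nonneg (h₁.nonneg hεe fun t => ?_) (h₂.nonneg hεe fun t => ?_))
  · calc Φ₁ g - Φ₂ g = (Φ₁ g - Φ₁ p) + (Φ₂ p - Φ₂ g) := by rw [hp₁₂]; abel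
      _ ≤ _ := add_le_add hle₁ hle₂
  all_goals exact mul_nonneg hε.le (he₀ t)

lemma eq_of_eq_projFn (hArch : IsArchimedeanVL X) (h₁ : IsVLHomHn Φ₁) (h₂ : IsVLHomHn Φ₂)
    (hproj : ∀ i, Φ₁ (projFn n i) = Φ₂ (projFn n i)) (hg : MemHn g) : Φ₁ g = Φ₂ g :=
  (h₁.le_of_eq_projFn hArch h₂ hproj hg).antisymm
    (h₂.le_of_eq_projFn hArch h₁ (fun i => (hproj i).symm) hg)

end IsVLHomHn

/-- a positively homogeneous continuous function calculus on an
Archimedean vector lattice satisfies the composition rule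
`Φ_{(Φ_x f₁, …, Φ_x f_m)}(g) = Φ_x (g ∘ (f₁ × ⋯ × f_m))`. -/
theorem stmt9 {X : Type*} [Lattice X] [AddCommGroup X] [Module ℝ X]
    [CovariantClass X X (· + ·) (· ≤ ·)]
    (hArch : IsArchimedeanVL X)
    (Φ : ∀ n : ℕ, (Fin n → X) → ((Fin n → ℝ) → ℝ) → X)
    (hhom : ∀ (n : ℕ) (x : Fin n → X), IsVLHomHn (Φ n x))
    (hproj : ∀ (n : ℕ) (x : Fin n → X) (i : Fin n), Φ n x (projFn n i) = x i) :
    ∀ (m n : ℕ) (x : Fin n → X) (f : Fin m → ((Fin n → ℝ) → ℝ))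
      (g : (Fin m → ℝ) → ℝ), (∀ i, MemHn (f i)) → MemHn g →
      Φ m (fun i => Φ n x (f i)) g = Φ n x (fun t => g (fun i => f i t)) := by
  intro m n x f g hf hg
  have : IsOrderedAddMonoid X := { add_le_add_left := fun _ _ hab c => add_le_add_left hab c }
  exact (hhom m _).eq_of_eq_projFn hArch ((hhom n x).comp hf) (fun i => hproj m _ i) hg
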